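/- Let d, C ∈ ℕ with d, C ≥ 1, let w ∈ ℝ^d be a fixed vector, and let x_1, …, x_C be i.i.d. standard Gaussian random vectors in ℝ^d. For j ∈ {1,…,d}, set A = (1/C)·Σ_{i=1}^C (w^T x_i)·x_i[j]. Then E[(A − w[j])·(A + 1)] = (w[j]² + ‖w‖²)/C. In particular, this expectation, which is the partial derivative of the y_q-LSA in-context learning risk with respect to the initial-guess parameter v[j] at the candidate stationary point, tends to 0 as C → ∞. -/

import Mathlib

open Matrix MeasureTheory ProbabilityTheory Filter

/-- The law of `C` i.i.d. standard Gaussian vectors `x_1, …, x_C` in `ℝ^d`. -/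
noncomputable def iidGaussLaw (d C : ℕ) : Measure (Fin C → Fin d → ℝ) :=
  Measure.pi fun _ : Fin C => Measure.pi fun _ : Fin d => gaussianReal 0 1

/-- The statistic `A = (1/C)·∑_i (wᵀ x_i)·x_i[j]`. -/
noncomputable def Astat (d C : ℕ) (w : EuclideanSpace ℝ (Fin d)) (j : Fin d)
    (xs : Fin C → Fin d → ℝ) : ℝ :=
  (C : ℝ)⁻¹ * ∑ i : Fin C, ((fun a => w a) ⬝ᵥ xs i) * xs i j

open Real
open scoped NNReal ENNReal

noncomputable def glI (n : ℕ) : ℝ := ∫ x : ℝ, x ^ n * rexp (-x ^ 2 / 2)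

lemma glI_integrable (n : ℕ) : Integrable (fun x : ℝ => x ^ n * rexp (-x ^ 2 / 2)) := by
  have h := integrable_rpow_mul_exp_neg_mul_sq (b := 1/2) (by norm_num)
    (s := (n : ℝ)) (lt_of_lt_of_le neg_one_lt_zero (Nat.cast_nonneg n))
  convert h using 2 with x
  rw [Real.rpow_natCast]
  ring_nf

lemma glI_tendsto_atTop (n : ℕ) :
    Tendsto (fun x : ℝ => x ^ n * rexp (-x ^ 2 / 2)) atTop (nhds 0) := by
  have h := rpow_mul_exp_neg_mul_sq_isLittleO_exp_neg (b := 1/2) (by norm_num) (n : ℝ)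
  have h2 : Tendsto (fun x : ℝ => rexp (-(1/2) * x)) atTop (nhds 0) := by
    have : Tendsto (fun x : ℝ => -(1/2) * x) atTop atBot :=
      (tendsto_const_mul_atBot_of_neg (by norm_num)).2 tendsto_id
    exact Real.tendsto_exp_atBot.comp this
  have := h.trans_tendsto h2
  refine this.congr (fun x => ?_)
  rw [Real.rpow_natCast]
  ring_nf

lemma glI_tendsto_atBot (n : ℕ) :
    Tendsto (fun x : ℝ => x ^ n * rexp (-x ^ 2 / 2)) atBot (nhds 0) := by
  have h := (glI_tendsto_atTop n).comp tendsto_neg_atBot_atTop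
  have h2 : Tendsto (fun x : ℝ => ((-1 : ℝ) ^ n) * ((-x) ^ n * rexp (-(-x) ^ 2 / 2)))
      atBot (nhds (((-1 : ℝ) ^ n) * 0)) := h.const_mul _
  rw [mul_zero] at h2
  refine h2.congr (fun x => ?_)
  have h4 : (-x : ℝ) ^ 2 = x ^ 2 := by ring
  rw [h4, ← mul_assoc, ← mul_pow]
  norm_num

lemma glI_step (n : ℕ) : glI (n + 2) = (n + 1) * glI n := by
  have hderiv : ∀ x : ℝ, HasDerivAt (fun x : ℝ => x ^ (n+1) * rexp (-x ^ 2 / 2))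
      ((n+1 : ℝ) * x ^ n * rexp (-x ^ 2 / 2) - x ^ (n+2) * rexp (-x ^ 2 / 2)) x := by
    intro x
    have h1 : HasDerivAt (fun x : ℝ => x ^ (n+1)) ((n+1 : ℝ) * x ^ n) x := by
      simpa using hasDerivAt_pow (n+1) x
    have h2 : HasDerivAt (fun x : ℝ => rexp (-x ^ 2 / 2)) (rexp (-x ^ 2 / 2) * (-x)) x := by
      have hx : HasDerivAt (fun x : ℝ => -x ^ 2 / 2) (-x) x := by
        have := (hasDerivAt_pow 2 x).neg.div_const 2
        refine this.congr_deriv ?_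
        push_cast; ring
      exact (Real.hasDerivAt_exp _).comp x hx
    have := h1.mul h2
    refine this.congr_deriv ?_
    ring
  have hint1 : Integrable (fun x : ℝ => ((n : ℝ)+1) * (x ^ n * rexp (-x ^ 2 / 2))) :=
    (glI_integrable n).const_mul ((n : ℝ)+1)
  have hf' : Integrable (fun x : ℝ =>
      (n+1 : ℝ) * x ^ n * rexp (-x ^ 2 / 2) - x ^ (n+2) * rexp (-x ^ 2 / 2)) := by
    refine Integrable.sub ?_ (glI_integrable (n+2))
    simpa [mul_assoc] using hint1
  have key := integral_of_hasDerivAt_of_tendsto hderiv hf'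
    (glI_tendsto_atBot (n+1)) (glI_tendsto_atTop (n+1))
  rw [sub_self] at key
  have h5 : (∫ x : ℝ, (((n : ℝ)+1) * (x ^ n * rexp (-x ^ 2 / 2)) -
      x ^ (n+2) * rexp (-x ^ 2 / 2))) = 0 := by
    rw [← key]; congr 1; funext x; ring
  rw [integral_sub hint1 (glI_integrable (n+2)), integral_const_mul, sub_eq_zero] at h5
  rw [glI, glI, ← h5]

lemma glI_zero : glI 0 = Real.sqrt (2 * π) := by
  rw [glI]
  have : ∀ x : ℝ, x ^ 0 * rexp (-x ^ 2 / 2) = rexp (-(1/2) * x ^ 2) := by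
    intro x; rw [pow_zero, one_mul]; ring_nf
  simp_rw [this]
  rw [integral_gaussian]
  rw [div_div_eq_mul_div, div_one]
  ring_nf

lemma glI_one : glI 1 = 0 := by
  have hderiv : ∀ x : ℝ, HasDerivAt (fun x : ℝ => -rexp (-x ^ 2 / 2))
      (x ^ 1 * rexp (-x ^ 2 / 2)) x := by
    intro x
    have hx : HasDerivAt (fun x : ℝ => -x ^ 2 / 2) (-x) x := by
      have := (hasDerivAt_pow 2 x).neg.div_const 2
      refine this.congr_deriv ?_
      push_cast; ring
    have := ((Real.hasDerivAt_exp (-x^2/2)).comp x hx).neg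
    refine this.congr_deriv ?_
    ring
  have hexp_bot : Tendsto (fun x : ℝ => rexp (-x ^ 2 / 2)) atBot (nhds 0) :=
    (glI_tendsto_atBot 0).congr (fun x => by rw [pow_zero, one_mul])
  have hexp_top : Tendsto (fun x : ℝ => rexp (-x ^ 2 / 2)) atTop (nhds 0) :=
    (glI_tendsto_atTop 0).congr (fun x => by rw [pow_zero, one_mul])
  have hbot : Tendsto (fun x : ℝ => -rexp (-x ^ 2 / 2)) atBot (nhds 0) := by
    simpa using hexp_bot.neg
  have htop : Tendsto (fun x : ℝ => -rexp (-x ^ 2 / 2)) atTop (nhds 0) := by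
    simpa using hexp_top.neg
  have := integral_of_hasDerivAt_of_tendsto hderiv (glI_integrable 1) hbot htop
  rw [glI, this, sub_zero]

lemma gauss_int_eq (f : ℝ → ℝ) :
    ∫ x, f x ∂(gaussianReal 0 1) = (Real.sqrt (2*π))⁻¹ * ∫ x, f x * rexp (-x ^ 2 / 2) := by
  rw [gaussianReal_of_var_ne_zero 0 one_ne_zero]
  have hmeas : Measurable (fun x => Real.toNNReal (gaussianPDFReal 0 1 x)) :=
    (measurable_gaussianPDFReal 0 1).real_toNNReal
  have : (volume.withDensity (gaussianPDF 0 1)) =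
      volume.withDensity (fun x => ((Real.toNNReal (gaussianPDFReal 0 1 x) : ℝ≥0) : ℝ≥0∞)) := rfl
  rw [this, integral_withDensity_eq_integral_smul hmeas]
  rw [← integral_const_mul]
  congr 1
  funext x
  simp only [NNReal.smul_def, smul_eq_mul,
    Real.coe_toNNReal _ (gaussianPDFReal_nonneg 0 1 x)]
  simp only [gaussianPDFReal]
  push_cast
  rw [mul_one, sub_zero]
  ring

lemma gauss_integrable_of (f : ℝ → ℝ)
    (h : Integrable (fun x => f x * rexp (-x ^ 2 / 2)) volume) :
    Integrable f (gaussianReal 0 1) := by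
  rw [gaussianReal_of_var_ne_zero 0 one_ne_zero]
  have hmeas : Measurable (fun x => Real.toNNReal (gaussianPDFReal 0 1 x)) :=
    (measurable_gaussianPDFReal 0 1).real_toNNReal
  have : (volume.withDensity (gaussianPDF 0 1)) =
      volume.withDensity (fun x => ((Real.toNNReal (gaussianPDFReal 0 1 x) : ℝ≥0) : ℝ≥0∞)) := rfl
  rw [this, integrable_withDensity_iff_integrable_smul hmeas]
  have h2 := h.const_mul ((Real.sqrt (2*π))⁻¹)
  refine h2.congr (Filter.Eventually.of_forall fun x => ?_)
  simp only [NNReal.smul_def, smul_eq_mul,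
    Real.coe_toNNReal _ (gaussianPDFReal_nonneg 0 1 x)]
  simp only [gaussianPDFReal]
  push_cast
  rw [mul_one, sub_zero]
  ring

lemma gmom_integrable (n : ℕ) : Integrable (fun x : ℝ => x ^ n) (gaussianReal 0 1) :=
  gauss_integrable_of _ (glI_integrable n)

lemma sqrt_two_pi_pos : (0:ℝ) < Real.sqrt (2*π) :=
  Real.sqrt_pos.2 (by positivity)

lemma gmom_eq (n : ℕ) : ∫ x, x ^ n ∂(gaussianReal 0 1) = (Real.sqrt (2*π))⁻¹ * glI n :=
  gauss_int_eq _

lemma gmom_zero : ∫ x, x ^ 0 ∂(gaussianReal 0 1) = 1 := by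
  rw [gmom_eq, glI_zero, inv_mul_cancel₀ sqrt_two_pi_pos.ne']

lemma gmom_one : ∫ x, x ^ 1 ∂(gaussianReal 0 1) = 0 := by
  rw [gmom_eq, glI_one, mul_zero]

lemma gmom_two : ∫ x, x ^ 2 ∂(gaussianReal 0 1) = 1 := by
  rw [gmom_eq, show (2:ℕ) = 0 + 2 from rfl, glI_step, glI_zero]
  push_cast
  rw [zero_add, one_mul, inv_mul_cancel₀ sqrt_two_pi_pos.ne']

lemma gmom_three : ∫ x, x ^ 3 ∂(gaussianReal 0 1) = 0 := by
  rw [gmom_eq, show (3:ℕ) = 1 + 2 from rfl, glI_step, glI_one]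
  simp

lemma gmom_four : ∫ x, x ^ 4 ∂(gaussianReal 0 1) = 3 := by
  rw [gmom_eq, show (4:ℕ) = 2 + 2 from rfl, glI_step,
    show glI 2 = glI (0 + 2) from rfl, glI_step, glI_zero]
  push_cast
  rw [zero_add, one_mul]
  rw [← mul_assoc, mul_comm _ (2+1:ℝ), mul_assoc, inv_mul_cancel₀ sqrt_two_pi_pos.ne']
  norm_num

section PiHelpers

variable {E : Type*} [MeasurableSpace E] {ι : Type*} [Fintype ι] [DecidableEq ι]
variable (μ : Measure E) [IsProbabilityMeasure μ]

private lemma prodIte_single (A : ι → ℝ) (k : ι) :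
    (∏ t : ι, (if t = k then A t else 1)) = A k := by
  rw [Finset.prod_ite_eq' Finset.univ k A, if_pos (Finset.mem_univ k)]

private lemma prodIte_pair (A B : ι → ℝ) {k j : ι} (hkj : k ≠ j) :
    (∏ t : ι, (if t = k then A t else if t = j then B t else 1)) = A k * B j := by
  rw [← Finset.mul_prod_erase Finset.univ _ (Finset.mem_univ k), if_pos rfl]
  congr 1
  rw [← Finset.mul_prod_erase _ _
    (Finset.mem_erase.2 ⟨hkj.symm, Finset.mem_univ j⟩), if_neg hkj.symm, if_pos rfl]
  have : ∀ t ∈ ((Finset.univ : Finset ι).erase k).erase j,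
      (if t = k then A t else if t = j then B t else 1) = 1 := by
    intro t ht
    rw [if_neg (Finset.mem_erase.1 (Finset.mem_of_mem_erase ht)).1,
      if_neg (Finset.mem_erase.1 ht).1]
  rw [Finset.prod_congr rfl this, Finset.prod_const_one, mul_one]

private lemma prodIte_triple (A B D : ι → ℝ) {k j m : ι} (hkj : k ≠ j) (hkm : k ≠ m)
    (hjm : j ≠ m) :
    (∏ t : ι, (if t = k then A t else if t = j then B t
      else if t = m then D t else 1)) = A k * (B j * D m) := by
  rw [← Finset.mul_prod_erase Finset.univ _ (Finset.mem_univ k), if_pos rfl]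
  congr 1
  rw [← Finset.mul_prod_erase _ _
    (Finset.mem_erase.2 ⟨hkj.symm, Finset.mem_univ j⟩), if_neg hkj.symm, if_pos rfl]
  congr 1
  rw [← Finset.mul_prod_erase _ _ (Finset.mem_erase.2 ⟨hjm.symm,
    Finset.mem_erase.2 ⟨hkm.symm, Finset.mem_univ m⟩⟩), if_neg hkm.symm, if_neg hjm.symm,
    if_pos rfl]
  have : ∀ t ∈ (((Finset.univ : Finset ι).erase k).erase j).erase m,
      (if t = k then A t else if t = j then B t
        else if t = m then D t else 1) = 1 := by
    intro t ht
    have h1 := (Finset.mem_erase.1 ht).1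
    have h2 := (Finset.mem_erase.1 (Finset.mem_of_mem_erase ht)).1
    have h3 := (Finset.mem_erase.1
      (Finset.mem_of_mem_erase (Finset.mem_of_mem_erase ht))).1
    rw [if_neg h3, if_neg h2, if_neg h1]
  rw [Finset.prod_congr rfl this, Finset.prod_const_one, mul_one]

lemma pi_integral_single (f : E → ℝ) (k : ι) :
    ∫ x : ι → E, f (x k) ∂(Measure.pi fun _ : ι => μ) = ∫ y, f y ∂μ := by
  letI : MeasureSpace E := ⟨μ⟩
  haveI : SigmaFinite (volume : Measure E) := inferInstanceAs (SigmaFinite μ)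
  have h := MeasureTheory.integral_fintype_prod_eq_prod (𝕜 := ℝ) (μ := fun _ => volume)
    (fun (t : ι) (y : E) => if t = k then f y else 1)
  have h2 : ∀ t : ι, (∫ y : E, (if t = k then f y else 1))
      = if t = k then ∫ y, f y ∂μ else 1 := by
    intro t
    split_ifs with ht
    · rfl
    · simp
  rw [show (Measure.pi fun _ : ι => μ) = (volume : Measure (ι → E)) from rfl]
  calc ∫ x : ι → E, f (x k)
      = ∫ x : ι → E, ∏ t : ι, (if t = k then f (x t) else 1) := by
        congr 1; funext x; rw [prodIte_single (fun t => f (x t)) k]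
    _ = ∏ t : ι, ∫ y : E, (if t = k then f y else 1) := h
    _ = ∏ t : ι, (if t = k then ∫ y, f y ∂μ else 1) :=
        Finset.prod_congr rfl (fun t _ => h2 t)
    _ = ∫ y, f y ∂μ := prodIte_single (fun _ => ∫ y, f y ∂μ) k

lemma pi_integrable_single {f : E → ℝ} (hf : Integrable f μ) (k : ι) :
    Integrable (fun x : ι → E => f (x k)) (Measure.pi fun _ : ι => μ) := by
  letI : MeasureSpace E := ⟨μ⟩
  haveI : SigmaFinite (volume : Measure E) := inferInstanceAs (SigmaFinite μ)
  have h := MeasureTheory.Integrable.fintype_prod (𝕜 := ℝ) (μ := fun _ => μ)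
    (f := fun (t : ι) (y : E) => if t = k then f y else 1) (fun t => by
      split_ifs with ht
      · exact hf
      · exact integrable_const 1)
  have heq : ∀ x : ι → E, (∏ t : ι, (if t = k then f (x t) else 1)) = f (x k) :=
    fun x => prodIte_single (fun t => f (x t)) k
  exact (h.congr (Filter.Eventually.of_forall heq) : _)

lemma pi_integral_pair (f g : E → ℝ) {k j : ι} (hkj : k ≠ j) :
    ∫ x : ι → E, f (x k) * g (x j) ∂(Measure.pi fun _ : ι => μ)
      = (∫ y, f y ∂μ) * ∫ y, g y ∂μ := by
  letI : MeasureSpace E := ⟨μ⟩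
  haveI : SigmaFinite (volume : Measure E) := inferInstanceAs (SigmaFinite μ)
  have h := MeasureTheory.integral_fintype_prod_eq_prod (𝕜 := ℝ) (μ := fun _ => volume)
    (fun (t : ι) (y : E) => if t = k then f y else if t = j then g y else 1)
  have h2 : ∀ t : ι, (∫ y : E, (if t = k then f y else if t = j then g y else 1))
      = if t = k then ∫ y, f y ∂μ else if t = j then ∫ y, g y ∂μ else 1 := by
    intro t
    split_ifs
    · rfl
    · rfl
    · simp
  rw [show (Measure.pi fun _ : ι => μ) = (volume : Measure (ι → E)) from rfl]
  calc ∫ x : ι → E, f (x k) * g (x j)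
      = ∫ x : ι → E, ∏ t : ι, (if t = k then f (x t) else if t = j then g (x t) else 1) := by
        congr 1; funext x; rw [prodIte_pair (fun t => f (x t)) (fun t => g (x t)) hkj]
    _ = ∏ t : ι, ∫ y : E, (if t = k then f y else if t = j then g y else 1) := h
    _ = ∏ t : ι, (if t = k then ∫ y, f y ∂μ else if t = j then ∫ y, g y ∂μ else 1) :=
        Finset.prod_congr rfl (fun t _ => h2 t)
    _ = (∫ y, f y ∂μ) * ∫ y, g y ∂μ :=
        prodIte_pair (fun _ => ∫ y, f y ∂μ) (fun _ => ∫ y, g y ∂μ) hkj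

lemma pi_integrable_pair {f g : E → ℝ} (hf : Integrable f μ) (hg : Integrable g μ)
    {k j : ι} (hkj : k ≠ j) :
    Integrable (fun x : ι → E => f (x k) * g (x j)) (Measure.pi fun _ : ι => μ) := by
  letI : MeasureSpace E := ⟨μ⟩
  haveI : SigmaFinite (volume : Measure E) := inferInstanceAs (SigmaFinite μ)
  have h := MeasureTheory.Integrable.fintype_prod (𝕜 := ℝ) (μ := fun _ => μ)
    (f := fun (t : ι) (y : E) => if t = k then f y else if t = j then g y else 1) (fun t => by
      split_ifs
      · exact hf
      · exact hg
      · exact integrable_const 1)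
  have heq : ∀ x : ι → E,
      (∏ t : ι, (if t = k then f (x t) else if t = j then g (x t) else 1))
        = f (x k) * g (x j) :=
    fun x => prodIte_pair (fun t => f (x t)) (fun t => g (x t)) hkj
  exact (h.congr (Filter.Eventually.of_forall heq) : _)

lemma pi_integral_triple (f g h : E → ℝ) {k j m : ι} (hkj : k ≠ j) (hkm : k ≠ m) (hjm : j ≠ m) :
    ∫ x : ι → E, f (x k) * (g (x j) * h (x m)) ∂(Measure.pi fun _ : ι => μ)
      = (∫ y, f y ∂μ) * ((∫ y, g y ∂μ) * ∫ y, h y ∂μ) := by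
  letI : MeasureSpace E := ⟨μ⟩
  haveI : SigmaFinite (volume : Measure E) := inferInstanceAs (SigmaFinite μ)
  have hh := MeasureTheory.integral_fintype_prod_eq_prod (𝕜 := ℝ) (μ := fun _ => volume)
    (fun (t : ι) (y : E) => if t = k then f y else if t = j then g y
      else if t = m then h y else 1)
  have h2 : ∀ t : ι, (∫ y : E, (if t = k then f y else if t = j then g y
      else if t = m then h y else 1))
      = if t = k then ∫ y, f y ∂μ else if t = j then ∫ y, g y ∂μ
        else if t = m then ∫ y, h y ∂μ else 1 := by
    intro t
    split_ifs
    · rfl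
    · rfl
    · rfl
    · simp
  rw [show (Measure.pi fun _ : ι => μ) = (volume : Measure (ι → E)) from rfl]
  calc ∫ x : ι → E, f (x k) * (g (x j) * h (x m))
      = ∫ x : ι → E, ∏ t : ι, (if t = k then f (x t) else if t = j then g (x t)
          else if t = m then h (x t) else 1) := by
        congr 1; funext x
        rw [prodIte_triple (fun t => f (x t)) (fun t => g (x t)) (fun t => h (x t)) hkj hkm hjm]
    _ = ∏ t : ι, ∫ y : E, (if t = k then f y else if t = j then g y
          else if t = m then h y else 1) := hh
    _ = ∏ t : ι, (if t = k then ∫ y, f y ∂μ else if t = j then ∫ y, g y ∂μ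
          else if t = m then ∫ y, h y ∂μ else 1) :=
        Finset.prod_congr rfl (fun t _ => h2 t)
    _ = (∫ y, f y ∂μ) * ((∫ y, g y ∂μ) * ∫ y, h y ∂μ) :=
        prodIte_triple (fun _ => ∫ y, f y ∂μ) (fun _ => ∫ y, g y ∂μ)
          (fun _ => ∫ y, h y ∂μ) hkj hkm hjm

lemma pi_integrable_triple {f g h : E → ℝ} (hf : Integrable f μ) (hg : Integrable g μ)
    (hh : Integrable h μ) {k j m : ι} (hkj : k ≠ j) (hkm : k ≠ m) (hjm : j ≠ m) :
    Integrable (fun x : ι → E => f (x k) * (g (x j) * h (x m)))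
      (Measure.pi fun _ : ι => μ) := by
  letI : MeasureSpace E := ⟨μ⟩
  haveI : SigmaFinite (volume : Measure E) := inferInstanceAs (SigmaFinite μ)
  have hInt := MeasureTheory.Integrable.fintype_prod (𝕜 := ℝ) (μ := fun _ => μ)
    (f := fun (t : ι) (y : E) => if t = k then f y else if t = j then g y
      else if t = m then h y else 1) (fun t => by
      split_ifs
      · exact hf
      · exact hg
      · exact hh
      · exact integrable_const 1)
  have heq : ∀ x : ι → E,
      (∏ t : ι, (if t = k then f (x t) else if t = j then g (x t)
        else if t = m then h (x t) else 1)) = f (x k) * (g (x j) * h (x m)) :=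
    fun x => prodIte_triple (fun t => f (x t)) (fun t => g (x t)) (fun t => h (x t)) hkj hkm hjm
  exact (hInt.congr (Filter.Eventually.of_forall heq) : _)

end PiHelpers

section DimLevel

variable {d : ℕ}

noncomputable abbrev muD (d : ℕ) : Measure (Fin d → ℝ) :=
  Measure.pi fun _ : Fin d => gaussianReal 0 1

lemma mono2_integrable (k j : Fin d) :
    Integrable (fun x : Fin d → ℝ => x k * x j) (muD d) := by
  by_cases h : k = j
  · rw [h]
    have := pi_integrable_single (ι := Fin d) (gaussianReal 0 1) (gmom_integrable 2) j
    refine this.congr (Filter.Eventually.of_forall fun x => ?_)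
    dsimp only; ring
  · have := pi_integrable_pair (ι := Fin d) (gaussianReal 0 1)
      (gmom_integrable 1) (gmom_integrable 1) h
    refine this.congr (Filter.Eventually.of_forall fun x => ?_)
    dsimp only; ring

lemma mono2_integral (k j : Fin d) :
    ∫ x : Fin d → ℝ, x k * x j ∂(muD d) = if k = j then 1 else 0 := by
  by_cases h : k = j
  · rw [if_pos h, h]
    rw [show (∫ x : Fin d → ℝ, x j * x j ∂(muD d))
        = ∫ x : Fin d → ℝ, (fun y => y ^ 2) (x j) ∂(muD d) from by congr 1; funext x; ring,
      pi_integral_single (ι := Fin d) (gaussianReal 0 1) (fun y => y ^ 2) j, gmom_two]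
  · rw [if_neg h]
    rw [show (∫ x : Fin d → ℝ, x k * x j ∂(muD d))
        = ∫ x : Fin d → ℝ, (fun y => y ^ 1) (x k) * (fun y => y ^ 1) (x j) ∂(muD d) from by
        congr 1; funext x; ring,
      pi_integral_pair (ι := Fin d) (gaussianReal 0 1) (fun y => y ^ 1) (fun y => y ^ 1) h,
      gmom_one, zero_mul]

lemma mono4_integrable (k m j : Fin d) :
    Integrable (fun x : Fin d → ℝ => (x k * x j) * (x m * x j)) (muD d) := by
  by_cases hkj : k = j
  · by_cases hmj : m = j
    · rw [hkj, hmj]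
      have := pi_integrable_single (ι := Fin d) (gaussianReal 0 1) (gmom_integrable 4) j
      refine this.congr (Filter.Eventually.of_forall fun x => ?_)
      dsimp only; ring
    · rw [hkj]
      have := pi_integrable_pair (ι := Fin d) (gaussianReal 0 1)
        (gmom_integrable 3) (gmom_integrable 1) (fun hh => hmj hh.symm)
      refine this.congr (Filter.Eventually.of_forall fun x => ?_)
      dsimp only; ring
  · by_cases hmj : m = j
    · rw [hmj]
      have := pi_integrable_pair (ι := Fin d) (gaussianReal 0 1)
        (gmom_integrable 1) (gmom_integrable 3) hkj
      refine this.congr (Filter.Eventually.of_forall fun x => ?_)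
      dsimp only; ring
    · by_cases hkm : k = m
      · rw [← hkm]
        have := pi_integrable_pair (ι := Fin d) (gaussianReal 0 1)
          (gmom_integrable 2) (gmom_integrable 2) hkj
        refine this.congr (Filter.Eventually.of_forall fun x => ?_)
        dsimp only; ring
      · have := pi_integrable_triple (ι := Fin d) (gaussianReal 0 1)
          (gmom_integrable 1) (gmom_integrable 1) (gmom_integrable 2) hkm hkj hmj
        refine this.congr (Filter.Eventually.of_forall fun x => ?_)
        dsimp only; ring

lemma mono4_integral (k m j : Fin d) :
    ∫ x : Fin d → ℝ, (x k * x j) * (x m * x j) ∂(muD d)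
      = (if k = m then 1 else 0)
        + 2 * (if k = j then 1 else 0) * (if m = j then 1 else 0) := by
  by_cases hkj : k = j
  · by_cases hmj : m = j
    · have hval : ∫ x : Fin d → ℝ, (x k * x j) * (x m * x j) ∂(muD d) = 3 := by
        rw [hkj, hmj]
        rw [show (∫ x : Fin d → ℝ, (x j * x j) * (x j * x j) ∂(muD d))
            = ∫ x : Fin d → ℝ, (fun y => y ^ 4) (x j) ∂(muD d) from by
            congr 1; funext x; ring,
          pi_integral_single (ι := Fin d) (gaussianReal 0 1) (fun y => y ^ 4) j, gmom_four]
      rw [hval, if_pos (hkj.trans hmj.symm), if_pos hkj, if_pos hmj]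
      norm_num
    · have hval : ∫ x : Fin d → ℝ, (x k * x j) * (x m * x j) ∂(muD d) = 0 := by
        rw [hkj]
        rw [show (∫ x : Fin d → ℝ, (x j * x j) * (x m * x j) ∂(muD d))
            = ∫ x : Fin d → ℝ, (fun y => y ^ 3) (x j) * (fun y => y ^ 1) (x m) ∂(muD d) from by
            congr 1; funext x; ring,
          pi_integral_pair (ι := Fin d) (gaussianReal 0 1) (fun y => y ^ 3) (fun y => y ^ 1)
            (fun hh => hmj hh.symm),
          gmom_three, zero_mul]
      rw [hval, if_neg (fun hh => hmj (hh.symm.trans hkj)), if_pos hkj, if_neg hmj]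
      norm_num
  · by_cases hmj : m = j
    · have hval : ∫ x : Fin d → ℝ, (x k * x j) * (x m * x j) ∂(muD d) = 0 := by
        rw [hmj]
        rw [show (∫ x : Fin d → ℝ, (x k * x j) * (x j * x j) ∂(muD d))
            = ∫ x : Fin d → ℝ, (fun y => y ^ 1) (x k) * (fun y => y ^ 3) (x j) ∂(muD d) from by
            congr 1; funext x; ring,
          pi_integral_pair (ι := Fin d) (gaussianReal 0 1) (fun y => y ^ 1) (fun y => y ^ 3) hkj,
          gmom_one, zero_mul]
      rw [hval, if_neg (fun hh => hkj (hh.trans hmj)), if_neg hkj, if_pos hmj]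
      norm_num
    · by_cases hkm : k = m
      · have hval : ∫ x : Fin d → ℝ, (x k * x j) * (x m * x j) ∂(muD d) = 1 := by
          rw [← hkm]
          rw [show (∫ x : Fin d → ℝ, (x k * x j) * (x k * x j) ∂(muD d))
              = ∫ x : Fin d → ℝ, (fun y => y ^ 2) (x k) * (fun y => y ^ 2) (x j) ∂(muD d) from by
              congr 1; funext x; ring,
            pi_integral_pair (ι := Fin d) (gaussianReal 0 1) (fun y => y ^ 2) (fun y => y ^ 2) hkj,
            gmom_two, mul_one]
        rw [hval, if_pos hkm, if_neg hkj, if_neg hmj]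
        norm_num
      · have hval : ∫ x : Fin d → ℝ, (x k * x j) * (x m * x j) ∂(muD d) = 0 := by
          rw [show (∫ x : Fin d → ℝ, (x k * x j) * (x m * x j) ∂(muD d))
              = ∫ x : Fin d → ℝ, (fun y => y ^ 1) (x k)
                  * ((fun y => y ^ 1) (x m) * (fun y => y ^ 2) (x j)) ∂(muD d) from by
              congr 1; funext x; ring,
            pi_integral_triple (ι := Fin d) (gaussianReal 0 1) (fun y => y ^ 1) (fun y => y ^ 1)
              (fun y => y ^ 2) hkm hkj hmj,
            gmom_one, zero_mul]
        rw [hval, if_neg hkm, if_neg hkj, if_neg hmj]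
        norm_num

end DimLevel

section SLevel

variable {d : ℕ} (w : EuclideanSpace ℝ (Fin d)) (j : Fin d)

noncomputable def Sfun (w : EuclideanSpace ℝ (Fin d)) (j : Fin d) (x : Fin d → ℝ) : ℝ :=
  (∑ k : Fin d, w k * x k) * x j

lemma Sfun_eq_sum (x : Fin d → ℝ) :
    Sfun w j x = ∑ k : Fin d, w k * (x k * x j) := by
  rw [Sfun, Finset.sum_mul]
  exact Finset.sum_congr rfl fun k _ => by ring

lemma Sfun_integrable : Integrable (Sfun w j) (muD d) := by
  have : (Sfun w j) = fun x => ∑ k : Fin d, w k * (x k * x j) := by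
    funext x; exact Sfun_eq_sum w j x
  rw [this]
  exact integrable_finset_sum _ fun k _ => (mono2_integrable k j).const_mul (w k)

lemma Sfun_integral : ∫ x, Sfun w j x ∂(muD d) = w j := by
  rw [show (∫ x, Sfun w j x ∂(muD d))
      = ∫ x, ∑ k : Fin d, w k * (x k * x j) ∂(muD d) from by
    congr 1; funext x; exact Sfun_eq_sum w j x]
  rw [integral_finset_sum _ fun k _ => (mono2_integrable k j).const_mul (w k)]
  have : ∀ k : Fin d, (∫ x, w k * (x k * x j) ∂(muD d)) = if k = j then w k else 0 := by
    intro k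
    rw [integral_const_mul, mono2_integral]
    by_cases h : k = j <;> simp [h]
  rw [Finset.sum_congr rfl fun k _ => this k, Finset.sum_ite_eq' Finset.univ j w,
    if_pos (Finset.mem_univ j)]

lemma Sfun_sq_eq (x : Fin d → ℝ) :
    Sfun w j x * Sfun w j x
      = ∑ k : Fin d, ∑ m : Fin d, (w k * w m) * ((x k * x j) * (x m * x j)) := by
  calc Sfun w j x * Sfun w j x
      = (∑ k : Fin d, w k * x k) * (∑ m : Fin d, w m * x m) * (x j * x j) := by
        rw [Sfun]; ring
    _ = (∑ k : Fin d, ∑ m : Fin d, (w k * x k) * (w m * x m)) * (x j * x j) := by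
        rw [Finset.sum_mul_sum]
    _ = ∑ k : Fin d, ∑ m : Fin d, (w k * w m) * ((x k * x j) * (x m * x j)) := by
        rw [Finset.sum_mul]
        refine Finset.sum_congr rfl fun k _ => ?_
        rw [Finset.sum_mul]
        exact Finset.sum_congr rfl fun m _ => by ring

lemma Sfun_sq_integrable :
    Integrable (fun x => Sfun w j x * Sfun w j x) (muD d) := by
  have : (fun x : Fin d → ℝ => Sfun w j x * Sfun w j x)
      = fun x => ∑ k : Fin d, ∑ m : Fin d, (w k * w m) * ((x k * x j) * (x m * x j)) := by
    funext x; exact Sfun_sq_eq w j x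
  rw [this]
  exact integrable_finset_sum _ fun k _ => integrable_finset_sum _ fun m _ =>
    (mono4_integrable k m j).const_mul (w k * w m)

lemma Sfun_sq_integral :
    ∫ x, Sfun w j x * Sfun w j x ∂(muD d) = (∑ k : Fin d, w k ^ 2) + 2 * w j ^ 2 := by
  rw [show (∫ x, Sfun w j x * Sfun w j x ∂(muD d))
      = ∫ x, ∑ k : Fin d, ∑ m : Fin d, (w k * w m) * ((x k * x j) * (x m * x j)) ∂(muD d) from by
    congr 1; funext x; exact Sfun_sq_eq w j x]
  rw [integral_finset_sum _ fun k _ => integrable_finset_sum _ fun m _ =>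
    (mono4_integrable k m j).const_mul (w k * w m)]
  have h1 : ∀ k : Fin d, (∫ x, ∑ m : Fin d, (w k * w m) * ((x k * x j) * (x m * x j)) ∂(muD d))
      = ∑ m : Fin d, (w k * w m) * ((if k = m then 1 else 0)
          + 2 * (if k = j then 1 else 0) * (if m = j then 1 else 0)) := by
    intro k
    rw [integral_finset_sum _ fun m _ => (mono4_integrable k m j).const_mul (w k * w m)]
    exact Finset.sum_congr rfl fun m _ => by rw [integral_const_mul, mono4_integral]
  rw [Finset.sum_congr rfl fun k _ => h1 k]
  have h2 : ∀ k m : Fin d, (w k * w m) * ((if k = m then 1 else 0)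
      + 2 * (if k = j then 1 else 0) * (if m = j then 1 else 0))
      = (if k = m then w k * w m else 0)
        + (if k = j then (if m = j then 2 * (w k * w m) else 0) else 0) := by
    intro k m
    by_cases h1' : k = m <;> by_cases h2' : k = j <;> by_cases h3' : m = j <;>
      simp [h1', h2', h3'] <;> ring
  rw [Finset.sum_congr rfl fun k _ => Finset.sum_congr rfl fun m _ => h2 k m]
  have h3 : ∀ k : Fin d, (∑ m : Fin d, ((if k = m then w k * w m else 0)
      + (if k = j then (if m = j then 2 * (w k * w m) else 0) else 0)))
      = w k * w k + (if k = j then 2 * (w k * w j) else 0) := by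
    intro k
    rw [Finset.sum_add_distrib, Finset.sum_ite_eq Finset.univ k (fun m => w k * w m),
      if_pos (Finset.mem_univ k)]
    congr 1
    by_cases h : k = j
    · simp only [if_pos h]
      rw [Finset.sum_ite_eq' Finset.univ j (fun m => 2 * (w k * w m)),
        if_pos (Finset.mem_univ j)]
    · simp [h]
  rw [Finset.sum_congr rfl fun k _ => h3 k, Finset.sum_add_distrib,
    Finset.sum_ite_eq' Finset.univ j (fun k => 2 * (w k * w j)), if_pos (Finset.mem_univ j)]
  have : ∑ k : Fin d, w k * w k = ∑ k : Fin d, w k ^ 2 :=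
    Finset.sum_congr rfl fun k _ => by ring
  rw [this]
  ring

end SLevel

/-- With `x_1, …, x_C` i.i.d. standard Gaussian vectors in `ℝ^d` and
`A = (1/C)·∑_i (wᵀ x_i)·x_i[j]`, one has `E[(A − w[j])·(A + 1)] = (w[j]² + ‖w‖²)/C`;
in particular this expectation (the partial derivative of the `y_q`-LSA in-context learning
risk with respect to the initial-guess parameter at the candidate stationary point) tends
to `0` as `C → ∞`. -/
theorem stmt_19 (d : ℕ) (hd : 1 ≤ d) (w : EuclideanSpace ℝ (Fin d)) (j : Fin d) :
    (∀ C : ℕ, 1 ≤ C →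
      ∫ xs, (Astat d C w j xs - w j) * (Astat d C w j xs + 1) ∂(iidGaussLaw d C) =
        (w j ^ 2 + ‖w‖ ^ 2) / (C : ℝ)) ∧
    Tendsto
      (fun C : ℕ =>
        ∫ xs, (Astat d C w j xs - w j) * (Astat d C w j xs + 1) ∂(iidGaussLaw d C))
      atTop (nhds 0) := by
  have hnorm : ‖w‖ ^ 2 = ∑ k : Fin d, w k ^ 2 := by
    rw [EuclideanSpace.norm_eq, Real.sq_sqrt (by positivity)]
    exact Finset.sum_congr rfl fun k _ => by rw [Real.norm_eq_abs, sq_abs]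
  have main : ∀ C : ℕ, 1 ≤ C →
      ∫ xs, (Astat d C w j xs - w j) * (Astat d C w j xs + 1) ∂(iidGaussLaw d C) =
        (w j ^ 2 + ‖w‖ ^ 2) / (C : ℝ) := by
    intro C hC
    have hCne : (C : ℝ) ≠ 0 := Nat.cast_ne_zero.2 (by omega)
    have hlaw : iidGaussLaw d C = Measure.pi fun _ : Fin C => muD d := rfl
    haveI : IsProbabilityMeasure (iidGaussLaw d C) := by
      rw [hlaw]; infer_instance
    have hAs : ∀ xs : Fin C → Fin d → ℝ,
        Astat d C w j xs = (C : ℝ)⁻¹ * ∑ i : Fin C, Sfun w j (xs i) := by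
      intro xs
      simp only [Astat, Sfun, dotProduct]
    have hS_int := Sfun_integrable w j
    have hS2_int := Sfun_sq_integrable w j
    -- integrability of pair products at the top level
    have hsingle_int : ∀ i : Fin C,
        Integrable (fun xs : Fin C → Fin d → ℝ => Sfun w j (xs i)) (iidGaussLaw d C) := by
      intro i
      rw [hlaw]
      exact pi_integrable_single (muD d) hS_int i
    have hpair_int : ∀ i l : Fin C,
        Integrable (fun xs : Fin C → Fin d → ℝ => Sfun w j (xs i) * Sfun w j (xs l))
          (iidGaussLaw d C) := by
      intro i l
      rw [hlaw]
      by_cases h : i = l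
      · rw [h]
        exact pi_integrable_single (muD d) hS2_int l
      · exact pi_integrable_pair (muD d) hS_int hS_int h
    have hsingle_val : ∀ i : Fin C,
        ∫ xs, Sfun w j (xs i) ∂(iidGaussLaw d C) = (w j) := by
      intro i
      rw [hlaw, pi_integral_single (muD d) (Sfun w j) i, Sfun_integral]
    have hpair_val : ∀ i l : Fin C,
        ∫ xs, Sfun w j (xs i) * Sfun w j (xs l) ∂(iidGaussLaw d C)
          = if i = l then ((∑ k : Fin d, w k ^ 2) + 2 * w j ^ 2) else (w j) * (w j) := by
      intro i l
      by_cases h : i = l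
      · rw [h, if_pos rfl, hlaw,
          pi_integral_single (muD d) (fun x => Sfun w j x * Sfun w j x) l,
          Sfun_sq_integral]
      · rw [if_neg h, hlaw, pi_integral_pair (muD d) (Sfun w j) (Sfun w j) h,
          Sfun_integral]
    -- integrability of A and A²
    have hA_int : Integrable (Astat d C w j) (iidGaussLaw d C) := by
      have h := (integrable_finset_sum Finset.univ fun i _ => hsingle_int i).const_mul
        ((C : ℝ)⁻¹)
      refine h.congr (Filter.Eventually.of_forall fun xs => ?_)
      simp only [hAs]
    have hA2_int : Integrable (fun xs => Astat d C w j xs * Astat d C w j xs)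
        (iidGaussLaw d C) := by
      have h := (integrable_finset_sum Finset.univ fun i (_ : i ∈ Finset.univ) =>
        integrable_finset_sum Finset.univ fun l (_ : l ∈ Finset.univ) =>
          hpair_int i l).const_mul ((C : ℝ)⁻¹ * (C : ℝ)⁻¹)
      refine h.congr (Filter.Eventually.of_forall fun xs => ?_)
      simp only [hAs]
      rw [← Finset.sum_mul_sum]
      ring
    -- value of ∫ A
    have hA_val : ∫ xs, Astat d C w j xs ∂(iidGaussLaw d C) = (w j) := by
      rw [show (∫ xs, Astat d C w j xs ∂(iidGaussLaw d C))
          = ∫ xs, (C : ℝ)⁻¹ * ∑ i : Fin C, Sfun w j (xs i) ∂(iidGaussLaw d C) from by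
        apply integral_congr_ae
        exact Filter.Eventually.of_forall fun xs => hAs xs]
      rw [integral_const_mul, integral_finset_sum _ fun i _ => hsingle_int i]
      rw [Finset.sum_congr rfl fun i _ => hsingle_val i, Finset.sum_const, Finset.card_univ,
        Fintype.card_fin, nsmul_eq_mul]
      field_simp
    -- value of ∫ A²
    have hA2_val : ∫ xs, Astat d C w j xs * Astat d C w j xs ∂(iidGaussLaw d C)
        = (C : ℝ)⁻¹ * (C : ℝ)⁻¹ * ((C : ℝ) * ((C : ℝ) * ((w j) * (w j)) + (((∑ k : Fin d, w k ^ 2) + 2 * w j ^ 2) - (w j) * (w j)))) := by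
      rw [show (∫ xs, Astat d C w j xs * Astat d C w j xs ∂(iidGaussLaw d C))
          = ∫ xs, ((C : ℝ)⁻¹ * (C : ℝ)⁻¹)
              * ∑ i : Fin C, ∑ l : Fin C, Sfun w j (xs i) * Sfun w j (xs l)
              ∂(iidGaussLaw d C) from by
        congr 1; funext xs; rw [hAs xs, ← Finset.sum_mul_sum]; ring]
      rw [integral_const_mul,
        integral_finset_sum _ fun i _ => integrable_finset_sum _ fun l _ => hpair_int i l]
      congr 1
      rw [Finset.sum_congr rfl fun i (_ : i ∈ Finset.univ) =>
        integral_finset_sum Finset.univ fun l (_ : l ∈ Finset.univ) => hpair_int i l]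
      rw [Finset.sum_congr rfl fun i (_ : i ∈ Finset.univ) =>
        Finset.sum_congr rfl fun l (_ : l ∈ Finset.univ) => hpair_val i l]
      have hinner : ∀ i : Fin C, (∑ l : Fin C, if i = l then ((∑ k : Fin d, w k ^ 2) + 2 * w j ^ 2) else (w j) * (w j))
          = (C : ℝ) * ((w j) * (w j)) + (((∑ k : Fin d, w k ^ 2) + 2 * w j ^ 2) - (w j) * (w j)) := by
        intro i
        have : ∀ l : Fin C, (if i = l then ((∑ k : Fin d, w k ^ 2) + 2 * w j ^ 2) else (w j) * (w j))
            = (w j) * (w j) + (if i = l then ((∑ k : Fin d, w k ^ 2) + 2 * w j ^ 2) - (w j) * (w j) else 0) := by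
          intro l; split_ifs <;> ring
        rw [Finset.sum_congr rfl fun l _ => this l, Finset.sum_add_distrib,
          Finset.sum_const, Finset.card_univ, Fintype.card_fin, nsmul_eq_mul,
          Finset.sum_ite_eq Finset.univ i (fun _ => ((∑ k : Fin d, w k ^ 2) + 2 * w j ^ 2) - (w j) * (w j)), if_pos (Finset.mem_univ i)]
      rw [Finset.sum_congr rfl fun i _ => hinner i, Finset.sum_const, Finset.card_univ,
        Fintype.card_fin, nsmul_eq_mul]
    -- expand the integrand
    have hpt : ∀ xs : Fin C → Fin d → ℝ,
        (Astat d C w j xs - w j) * (Astat d C w j xs + 1)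
          = Astat d C w j xs * Astat d C w j xs
            + ((1 - w j) * Astat d C w j xs + (-(w j))) := by
      intro xs; ring
    rw [show (∫ xs, (Astat d C w j xs - w j) * (Astat d C w j xs + 1) ∂(iidGaussLaw d C))
        = ∫ xs, (Astat d C w j xs * Astat d C w j xs
            + ((1 - w j) * Astat d C w j xs + (-(w j)))) ∂(iidGaussLaw d C) from by
      congr 1; funext xs; exact hpt xs]
    have hsum2 : Integrable (fun xs => (1 - w j) * Astat d C w j xs + -(w j))
        (iidGaussLaw d C) := by
      exact (hA_int.const_mul (1 - w j)).add (integrable_const _)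
    rw [integral_add hA2_int hsum2,
      integral_add (hA_int.const_mul (1 - w j)) (integrable_const (-(w j))),
      integral_const_mul, hA_val, hA2_val, integral_const]
    simp only [measure_univ, probReal_univ, ENNReal.toReal_one, smul_eq_mul, one_mul]
    rw [hnorm]
    field_simp
    ring
  refine ⟨main, ?_⟩
  have h0 : Tendsto (fun C : ℕ => (w j ^ 2 + ‖w‖ ^ 2) / (C : ℝ)) atTop (nhds 0) :=
    tendsto_const_div_atTop_nhds_zero_nat _
  refine h0.congr' ?_
  filter_upwards [eventually_ge_atTop 1] with C hC
  exact (main C hC).symm
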